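/- arXiv:math/0002021 — 2 statements merged into one kernel-verified Lean document; each statement's English description precedes it below -/
import Mathlib

section
/- Let S be a finite set with |S| = m ≥ 2 and let τ be a permutation of S that is d-regular for some divisor d of m. Then the number of permutations σ of S that are a single cycle of length m on S and satisfy τ ∘ σ ∘ τ⁻¹ = σ equals φ(d) · (m/d − 1)! · d^{m/d − 1}, where φ is Euler's totient function. -/
/-- The length of the orbit of `x` under the cyclic group generated by the permutation `τ`. -/
noncomputable def orbitLen {α : Type*} (τ : Equiv.Perm α) (x : α) : ℕ :=
  ({y | ∃ k : ℕ, (τ ^ k) x = y}).ncard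

/-- A permutation is `d`-regular if every one of its orbits (cycles, counting fixed points as
cycles of length 1) has cardinality exactly `d`. -/
def IsRegularPerm {α : Type*} (τ : Equiv.Perm α) (d : ℕ) : Prop :=
  ∀ x : α, orbitLen τ x = d

/-!
Cutting `α` along the cycles of `τ` identifies it with `Q × ZMod d`, where `Q` is the set of
the `m / d` cycles, so that `τ` becomes `(q, x) ↦ (q, x + 1)`. The permutations commuting with
this shift are exactly the maps `(q, x) ↦ (π q, x + a q)`, and such a map is a single cycle iff
`π` is a single cycle on `Q` and `∑ q, a q` is a unit: after `|Q|` steps a point `(q, x)` has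
come back to `(q, x + ∑ q, a q)`. There are `(|Q| - 1)!` choices of `π`, `φ(d)` units for the
sum and `d ^ (|Q| - 1)` vectors `a` with a prescribed sum.
-/

open Equiv Set Function

namespace Equiv.Perm

variable {α β : Type*}

theorem isCycleOn_univ_iff {σ : Perm α} : σ.IsCycleOn univ ↔ ∀ x y, σ.SameCycle x y :=
  ⟨fun h x y => h.2 (mem_univ x) (mem_univ y),
    fun h => ⟨σ.bijective.bijOn_univ, fun x _ y _ => h x y⟩⟩

theorem sameCycle_permCongr_apply_apply {e : α ≃ β} {σ : Perm α} {x y : α} :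
    (e.permCongr σ).SameCycle (e x) (e y) ↔ σ.SameCycle x y := by
  refine exists_congr fun i => ?_
  rw [← permCongrHom_coe, ← map_zpow, permCongrHom_coe, permCongr_apply, symm_apply_apply,
    e.apply_eq_iff_eq]

theorem isCycleOn_univ_permCongr_iff {e : α ≃ β} {σ : Perm α} :
    (e.permCongr σ).IsCycleOn univ ↔ σ.IsCycleOn univ := by
  rw [isCycleOn_univ_iff, isCycleOn_univ_iff]
  exact (e.forall_congr fun x => e.forall_congr fun y => sameCycle_permCongr_apply_apply.symm).symm

theorem ncard_isCycleOn_commute_permCongr (e : α ≃ β) (ρ : Perm α) :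
    {σ : Perm β | σ.IsCycleOn univ ∧ Commute (e.permCongr ρ) σ}.ncard =
      {σ : Perm α | σ.IsCycleOn univ ∧ Commute ρ σ}.ncard := by
  rw [← Nat.card_coe_set_eq, ← Nat.card_coe_set_eq]
  refine (Nat.card_congr (e.permCongr.subtypeEquiv fun σ => ?_)).symm
  rw [mem_ofPred_eq, mem_ofPred_eq, isCycleOn_univ_permCongr_iff, ← permCongrHom_coe,
    commute_map_iff e.permCongrHom.injective]

theorem isCycleOn_univ_iff_isCycle_and_support_eq_univ [Fintype α] [DecidableEq α]
    [Nontrivial α] {σ : Perm α} :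
    σ.IsCycleOn univ ↔ σ.IsCycle ∧ σ.support = Finset.univ := by
  refine ⟨fun h => ⟨isCycle_iff_exists_isCycleOn.mpr
      ⟨univ, nontrivial_univ, h, fun _ _ => mem_univ _⟩,
    Finset.eq_univ_of_forall fun x => mem_support.mpr (h.apply_ne nontrivial_univ (mem_univ x))⟩,
    fun ⟨hc, hs⟩ => ?_⟩
  convert hc.isCycleOn
  rw [← coe_support_eq_set_support, hs, Finset.coe_univ]

theorem isCycleOn_univ_iff_cycleType [Fintype α] [DecidableEq α] [Nontrivial α] {σ : Perm α} :
    σ.IsCycleOn univ ↔ σ.cycleType = {Fintype.card α} := by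
  rw [isCycleOn_univ_iff_isCycle_and_support_eq_univ]
  refine ⟨fun ⟨hc, hs⟩ => by rw [hc.cycleType, hs, Finset.card_univ], fun h => ?_⟩
  have hc : σ.IsCycle := card_cycleType_eq_one.mp (by rw [h, Multiset.card_singleton])
  refine ⟨hc, Finset.eq_univ_of_card _ ?_⟩
  simpa [hc.cycleType] using h

theorem ncard_isCycleOn_univ [Fintype α] [Nonempty α] :
    {σ : Perm α | σ.IsCycleOn univ}.ncard = (Fintype.card α - 1).factorial := by
  classical
  rcases subsingleton_or_nontrivial α with hα | hα
  · obtain ⟨_⟩ := nonempty_unique α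
    simp [isCycleOn_of_subsingleton]
  · have := card_of_cycleType_singleton (α := α) Fintype.one_lt_card le_rfl
    rw [Nat.choose_self, mul_one] at this
    rw [← this, ← ncard_coe_finset, Finset.coe_filter]
    simp only [isCycleOn_univ_iff_cycleType, Finset.mem_univ, true_and]

theorem IsCycleOn.pow_apply_eq_self_iff_card_dvd [Fintype α] {π : Perm α}
    (hπ : π.IsCycleOn univ) {n : ℕ} (q : α) : (π ^ n) q = q ↔ Fintype.card α ∣ n := by
  have hπ' : π.IsCycleOn (Finset.univ : Finset α) := by rwa [Finset.coe_univ]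
  rw [hπ'.pow_apply_eq (Finset.mem_univ q), Finset.card_univ]

theorem IsCycleOn.sum_range_card_pow_apply {M : Type*} [Fintype α] [AddCommMonoid M]
    {π : Perm α} (hπ : π.IsCycleOn univ) (a : α → M) (q : α) :
    ∑ t ∈ Finset.range (Fintype.card α), a ((π ^ t) q) = ∑ i, a i := by
  have hπ' : π.IsCycleOn (Finset.univ : Finset α) := by rwa [Finset.coe_univ]
  refine Finset.sum_nbij (fun t => (π ^ t) q) (fun _ _ => Finset.mem_univ _) ?_ ?_ fun _ _ => rfl
  · intro t ht t' ht' h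
    exact ((hπ'.pow_apply_eq_pow_apply (Finset.mem_univ q)).mp h).eq_of_lt_of_lt
      (Finset.mem_range.mp ht) (Finset.mem_range.mp ht')
  · intro r _
    obtain ⟨k, hk, rfl⟩ := hπ'.exists_pow_eq (Finset.mem_univ q) (Finset.mem_univ r)
    exact ⟨k, Finset.mem_coe.mpr (Finset.mem_range.mpr hk), rfl⟩

end Equiv.Perm

theorem ncard_setOf_sum {ι G : Type*} [Fintype ι] [Nonempty ι] [AddCommGroup G] [Finite G]
    (p : G → Prop) :
    {a : ι → G | p (∑ i, a i)}.ncard =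
      {x | p x}.ncard * Nat.card G ^ (Fintype.card ι - 1) := by
  classical
  obtain ⟨i₀⟩ := ‹Nonempty ι›
  let e : (ι → G) ≃ G × ({i // i ≠ i₀} → G) :=
    (funSplitAt i₀ G).trans (prodCongrLeft fun b => Equiv.addRight (∑ j, b j))
  have he (a : ι → G) : (e a).1 = ∑ i, a i := (Fintype.sum_eq_add_sum_subtype_ne a i₀).symm
  have : {a : ι → G | p (∑ i, a i)} = e ⁻¹' ({x | p x} ×ˢ univ) := by
    ext a; simp [he]
  rw [this, ncard_preimage_of_injective_subset_range e.injective (by simp), ncard_prod,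
    ncard_univ, Nat.card_fun, Nat.card_eq_fintype_card (α := {i // i ≠ i₀}),
    Fintype.card_subtype_compl, Fintype.card_subtype_eq]

theorem ZMod.ncard_setOf_isUnit (d : ℕ) [NeZero d] :
    {x : ZMod d | IsUnit x}.ncard = d.totient := by
  rw [show {x : ZMod d | IsUnit x} = range ((↑) : (ZMod d)ˣ → ZMod d) from rfl,
    ncard_range_of_injective Units.val_injective, Nat.card_eq_fintype_card,
    ZMod.card_units_eq_totient]

section ShearAdd

variable {ι G : Type*}

def shearAdd [AddGroup G] (π : Perm ι) (a : ι → G) : Perm (ι × G) :=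
  π.prodShear fun q => Equiv.addRight (a q)

@[simp]
theorem shearAdd_apply [AddGroup G] (π : Perm ι) (a : ι → G) (q : ι) (x : G) :
    shearAdd π a (q, x) = (π q, x + a q) :=
  rfl

theorem shearAdd_injective [AddGroup G] :
    Injective (uncurry (shearAdd : Perm ι → (ι → G) → Perm (ι × G))) := by
  rintro ⟨π, a⟩ ⟨π', a'⟩ h
  have h' (q : ι) : shearAdd π a (q, 0) = shearAdd π' a' (q, 0) := by
    simp only [uncurry_apply_pair] at h
    rw [h]
  simp only [shearAdd_apply, zero_add, Prod.mk.injEq] at h'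
  exact Prod.ext (Equiv.ext fun q => (h' q).1) (funext fun q => (h' q).2)

theorem shearAdd_pow_apply [AddCommGroup G] (π : Perm ι) (a : ι → G) (k : ℕ) (q : ι)
    (x : G) :
    (shearAdd π a ^ k) (q, x) = ((π ^ k) q, x + ∑ t ∈ Finset.range k, a ((π ^ t) q)) := by
  induction k with
  | zero => simp
  | succ k ih =>
    rw [pow_succ', Perm.mul_apply, ih, shearAdd_apply, Finset.sum_range_succ, pow_succ',
      Perm.mul_apply, add_assoc]

theorem shearAdd_pow_card_mul_apply [Fintype ι] [AddCommGroup G] {π : Perm ι} {a : ι → G}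
    (hπ : π.IsCycleOn univ) (t : ℕ) (q : ι) (x : G) :
    (shearAdd π a ^ (Fintype.card ι * t)) (q, x) = (q, x + t • ∑ i, a i) := by
  induction t with
  | zero => simp
  | succ t ih =>
    rw [mul_add_one, add_comm, pow_add, Perm.mul_apply, ih, shearAdd_pow_apply,
      hπ.sum_range_card_pow_apply, (hπ.pow_apply_eq_self_iff_card_dvd q).mpr dvd_rfl,
      succ_nsmul, add_assoc]

theorem shearAdd_one_one_pow_apply {d : ℕ} (k : ℕ) (p : ι × ZMod d) :
    (shearAdd 1 1 ^ k) p = (p.1, p.2 + k) := by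
  rw [← Prod.mk.eta (p := p), shearAdd_pow_apply]
  simp

variable {d : ℕ} [NeZero d]

theorem apply_eq_of_commute_shearAdd_one_one {σ : Perm (ι × ZMod d)}
    (h : Commute (shearAdd 1 1) σ) (q : ι) (x : ZMod d) :
    σ (q, x) = ((σ (q, 0)).1, (σ (q, 0)).2 + x) := by
  obtain ⟨k, rfl⟩ := ZMod.natCast_zmod_surjective x
  have := congr($((h.pow_left k).eq) (q, 0))
  simp only [Perm.mul_apply, shearAdd_one_one_pow_apply, zero_add] at this
  exact this.symm

theorem commute_shearAdd_one_one_iff {σ : Perm (ι × ZMod d)} :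
    Commute (shearAdd 1 1) σ ↔ σ ∈ range (uncurry shearAdd) := by
  refine ⟨fun h => ?_, ?_⟩
  · have hσ := apply_eq_of_commute_shearAdd_one_one h
    let π₀ (q : ι) : ι := (σ (q, 0)).1
    have hinj : Injective π₀ := fun q q' hq => by
      have := σ.injective <| (hσ q' ((σ (q, 0)).2 - (σ (q', 0)).2)).trans <|
        Prod.ext hq.symm (add_sub_cancel _ _)
      exact (congrArg Prod.fst this).symm
    have hsurj : Surjective π₀ := fun r => by
      obtain ⟨⟨q, x⟩, hqx⟩ := σ.surjective (r, 0)
      exact ⟨q, by rw [hσ] at hqx; exact congrArg Prod.fst hqx⟩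
    refine ⟨(Equiv.ofBijective π₀ ⟨hinj, hsurj⟩, fun q => (σ (q, 0)).2), Equiv.ext ?_⟩
    rintro ⟨q, x⟩
    rw [uncurry_apply_pair, shearAdd_apply, hσ q x]
    exact Prod.ext rfl (add_comm _ _)
  · rintro ⟨⟨π, a⟩, rfl⟩
    refine Equiv.ext fun ⟨q, x⟩ => ?_
    simp [add_right_comm]

theorem isCycleOn_shearAdd_iff [Fintype ι] [Nonempty ι] {π : Perm ι} {a : ι → ZMod d} :
    (shearAdd π a).IsCycleOn univ ↔ π.IsCycleOn univ ∧ IsUnit (∑ i, a i) := by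
  simp only [Perm.isCycleOn_univ_iff]
  constructor
  · intro h
    have hπ : ∀ q q', π.SameCycle q q' := fun q q' => by
      obtain ⟨k, -, hk⟩ := (h (q, 0) (q', 0)).exists_pow_eq'
      rw [shearAdd_pow_apply] at hk
      exact ⟨k, by rw [zpow_natCast]; exact congrArg Prod.fst hk⟩
    refine ⟨hπ, ?_⟩
    obtain ⟨q₀⟩ := ‹Nonempty ι›
    obtain ⟨k, -, hk⟩ := (h (q₀, 0) (q₀, 1)).exists_pow_eq'
    obtain ⟨t, rfl⟩ : Fintype.card ι ∣ k := by
      rw [← (Perm.isCycleOn_univ_iff.mpr hπ).pow_apply_eq_self_iff_card_dvd q₀]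
      rw [shearAdd_pow_apply] at hk
      exact congrArg Prod.fst hk
    rw [shearAdd_pow_card_mul_apply (Perm.isCycleOn_univ_iff.mpr hπ), zero_add,
      nsmul_eq_mul] at hk
    exact IsUnit.of_mul_eq_one_right _ (congrArg Prod.snd hk)
  · rintro ⟨hπ, hs⟩ ⟨q, x⟩ ⟨q', x'⟩
    obtain ⟨k, -, hk⟩ := (hπ q q').exists_pow_eq'
    obtain ⟨t, ht⟩ := ZMod.natCast_zmod_surjective
      ((x' - x - ∑ j ∈ Finset.range k, a ((π ^ j) q)) * ((hs.unit⁻¹ : (ZMod d)ˣ) : ZMod d))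
    refine ⟨(Fintype.card ι * t + k : ℕ), ?_⟩
    rw [zpow_natCast, pow_add, Perm.mul_apply, shearAdd_pow_apply π a k q x, hk,
      shearAdd_pow_card_mul_apply (Perm.isCycleOn_univ_iff.mpr hπ), nsmul_eq_mul, ht, mul_assoc,
      hs.val_inv_mul, mul_one]
    exact Prod.ext rfl (by dsimp only; abel)

theorem ncard_isCycleOn_commute_shearAdd_one_one (ι : Type*) [Fintype ι] [Nonempty ι] (d : ℕ)
    [NeZero d] :
    {σ : Perm (ι × ZMod d) | σ.IsCycleOn univ ∧ Commute (shearAdd 1 1) σ}.ncard =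
      d.totient * (Fintype.card ι - 1).factorial * d ^ (Fintype.card ι - 1) := by
  have : {σ : Perm (ι × ZMod d) | σ.IsCycleOn univ ∧ Commute (shearAdd 1 1) σ} =
      uncurry shearAdd '' ({π : Perm ι | π.IsCycleOn univ} ×ˢ {a | IsUnit (∑ i, a i)}) := by
    ext σ
    constructor
    · rintro ⟨hσ, hc⟩
      obtain ⟨⟨π, a⟩, rfl⟩ := commute_shearAdd_one_one_iff.mp hc
      exact ⟨(π, a), isCycleOn_shearAdd_iff.mp hσ, rfl⟩
    · rintro ⟨⟨π, a⟩, h, rfl⟩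
      exact ⟨isCycleOn_shearAdd_iff.mpr h, commute_shearAdd_one_one_iff.mpr ⟨_, rfl⟩⟩
  rw [this, ncard_image_of_injective _ shearAdd_injective, ncard_prod, Perm.ncard_isCycleOn_univ,
    ncard_setOf_sum, ZMod.ncard_setOf_isUnit, Nat.card_zmod]
  ring

end ShearAdd

theorem orbitLen_eq_minimalPeriod {α : Type*} [Finite α] (τ : Perm α) (x : α) :
    orbitLen τ x = minimalPeriod τ x := by
  have hpos := minimalPeriod_pos_of_mem_periodicPts (τ.injective.mem_periodicPts x)
  have : {y | ∃ k : ℕ, (τ ^ k) x = y} = (fun k => τ^[k] x) '' Iio (minimalPeriod τ x) := by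
    ext y
    simp only [mem_ofPred_eq, mem_image, mem_Iio, ← Perm.iterate_eq_pow]
    exact ⟨fun ⟨k, hk⟩ =>
        ⟨k % _, Nat.mod_lt _ hpos, iterate_mod_minimalPeriod_eq.trans hk⟩,
      fun ⟨k, _, hk⟩ => ⟨k, hk⟩⟩
  rw [orbitLen, this, iterate_injOn_Iio_minimalPeriod.ncard_image, ← Finset.coe_range,
    ncard_coe_finset, Finset.card_range]

namespace Equiv.Perm

variable {α : Type*} {τ : Perm α} {d : ℕ}

noncomputable def cycleCoords (τ : Perm α) (d : ℕ) :
    Quotient (SameCycle.setoid τ) × ZMod d → α :=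
  fun p => (τ ^ p.2.val) p.1.out

theorem cycleCoords_natCast (hτ : ∀ x, minimalPeriod τ x = d)
    (q : Quotient (SameCycle.setoid τ)) (k : ℕ) : cycleCoords τ d (q, k) = (τ ^ k) q.out := by
  rw [cycleCoords, ZMod.val_natCast, ← iterate_eq_pow, ← iterate_eq_pow, ← hτ q.out,
    iterate_mod_minimalPeriod_eq]

theorem bijective_cycleCoords [Finite α] [NeZero d] (hτ : ∀ x, minimalPeriod τ x = d) :
    Bijective (cycleCoords τ d) := by
  refine ⟨fun ⟨q, x⟩ ⟨q', x'⟩ h => ?_, fun y => ?_⟩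
  · replace h : (τ ^ x.val) q.out = (τ ^ x'.val) q'.out := h
    obtain rfl : q = q' := Quotient.out_equiv_out.mp <| sameCycle_pow_right.mp <|
      h ▸ sameCycle_pow_right.mpr (SameCycle.refl τ q.out)
    have hlt (z : ZMod d) : z.val ∈ Iio (minimalPeriod τ q.out) := hτ q.out ▸ ZMod.val_lt z
    rw [← iterate_eq_pow, ← iterate_eq_pow] at h
    exact Prod.ext rfl (ZMod.val_injective d (iterate_injOn_Iio_minimalPeriod (hlt x) (hlt x') h))
  · obtain ⟨k, -, hk⟩ := (Quotient.mk_out (s := SameCycle.setoid τ) y).exists_pow_eq'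
    exact ⟨(⟦y⟧, k), (cycleCoords_natCast hτ _ k).trans hk⟩

theorem permCongr_shearAdd_one_one [Finite α] [NeZero d] (hτ : ∀ x, minimalPeriod τ x = d) :
    (Equiv.ofBijective _ (bijective_cycleCoords hτ)).permCongr (shearAdd 1 1) = τ := by
  ext y
  obtain ⟨⟨q, x⟩, rfl⟩ := (bijective_cycleCoords hτ).2 y
  obtain ⟨k, rfl⟩ := ZMod.natCast_zmod_surjective x
  rw [permCongr_apply, ofBijective_symm_apply_apply, shearAdd_apply, ofBijective_apply,
    Perm.one_apply, Pi.one_apply, ← Nat.cast_succ, cycleCoords_natCast hτ,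
    cycleCoords_natCast hτ, pow_succ', Perm.mul_apply]

end Equiv.Perm

theorem card_fixed_rotations_of_regular_general {α : Type*} [Fintype α]
    (m d : ℕ) (hm : 2 ≤ m) (hcard : Fintype.card α = m)
    (τ : Equiv.Perm α) (hτ : IsRegularPerm τ d) :
    ({σ : Equiv.Perm α | σ.IsCycleOn (Set.univ : Set α) ∧ τ * σ * τ⁻¹ = σ}).ncard
      = Nat.totient d * Nat.factorial (m / d - 1) * d ^ (m / d - 1) := by
  have hper (x : α) : minimalPeriod τ x = d := (orbitLen_eq_minimalPeriod τ x).symm.trans (hτ x)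
  obtain ⟨x₀⟩ : Nonempty α := Fintype.card_pos_iff.mp (by omega)
  have : NeZero d := ⟨hper x₀ ▸
    (minimalPeriod_pos_of_mem_periodicPts (τ.injective.mem_periodicPts x₀)).ne'⟩
  let Q := Quotient (Perm.SameCycle.setoid τ)
  have : Fintype Q := Fintype.ofFinite Q
  let e : Q × ZMod d ≃ α := Equiv.ofBijective _ (Perm.bijective_cycleCoords hper)
  have hQ : Fintype.card Q * d = m := by
    rw [← hcard, ← Fintype.card_congr e, Fintype.card_prod, ZMod.card]
  have : Nonempty Q := (e.nonempty_congr.mpr ⟨x₀⟩).map Prod.fst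
  simp_rw [mul_inv_eq_iff_eq_mul, ← commute_iff_eq]
  rw [← Perm.permCongr_shearAdd_one_one hper, Perm.ncard_isCycleOn_commute_permCongr,
    ncard_isCycleOn_commute_shearAdd_one_one, ← hQ, Nat.mul_div_cancel _ (NeZero.pos d)]

/-- Theorem (the counting theorem, regular case): if `|S| = m ≥ 2` and `τ` is a `d`-regular
permutation of `S` for a divisor `d` of `m`, then the number of permutations `σ` of `S` that
are a single cycle of length `m` on `S` and commute with `τ` (i.e. `τ ∘ σ ∘ τ⁻¹ = σ`) is
`φ(d) · (m/d − 1)! · d^(m/d − 1)`. -/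
theorem card_fixed_rotations_of_regular {α : Type*} [Fintype α] [DecidableEq α]
    (m d : ℕ) (hm : 2 ≤ m) (hcard : Fintype.card α = m) (hd : d ∣ m)
    (τ : Equiv.Perm α) (hτ : IsRegularPerm τ d) :
    ({σ : Equiv.Perm α | σ.IsCycleOn (Set.univ : Set α) ∧ τ * σ * τ⁻¹ = σ}).ncard
      = Nat.totient d * Nat.factorial (m / d - 1) * d ^ (m / d - 1) :=
  card_fixed_rotations_of_regular_general m d hm hcard τ hτ
end

section
/- Let S be a finite set with |S| = m ≥ 2 and let τ be a permutation of S that is not d-regular for any d (i.e., τ has two cycles of different lengths, counting fixed points as cycles of length 1). Then there is no permutation σ of S that is a single cycle of length m on S and satisfies τ ∘ σ ∘ τ⁻¹ = σ. -/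
/-- Theorem (the counting theorem, irregular case): if `|S| = m ≥ 2` and the permutation `τ` of
`S` has two cycles of different lengths (counting fixed points as cycles of length 1), then no
permutation `σ` of `S` which is a single cycle of length `m` on `S` satisfies
`τ ∘ σ ∘ τ⁻¹ = σ`. -/
theorem no_fixed_rotation_of_irregular {α : Type*} [Fintype α] [DecidableEq α]
    (m : ℕ) (hm : 2 ≤ m) (hcard : Fintype.card α = m)
    (τ : Equiv.Perm α) (hτ : ∃ x y : α, orbitLen τ x ≠ orbitLen τ y) :
    ¬ ∃ σ : Equiv.Perm α, σ.IsCycleOn (Set.univ : Set α) ∧ τ * σ * τ⁻¹ = σ := by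
  rintro ⟨σ, hcyc, hconj⟩
  obtain ⟨x, y, hxy⟩ := hτ
  apply hxy
  have hcomm : Commute τ σ := by
    rw [mul_inv_eq_iff_eq_mul] at hconj
    exact hconj
  obtain ⟨j, hj⟩ := hcyc.2 (Set.mem_univ x) (Set.mem_univ y)
  have key : ∀ k : ℕ, (τ ^ k) y = (σ ^ j) ((τ ^ k) x) := by
    intro k
    have hc : Commute (τ ^ k) (σ ^ j) := (hcomm.pow_left k).zpow_right j
    calc (τ ^ k) y = (τ ^ k) ((σ ^ j) x) := by rw [hj]
    _ = ((τ ^ k) * (σ ^ j)) x := rfl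
    _ = ((σ ^ j) * (τ ^ k)) x := by rw [hc]
    _ = (σ ^ j) ((τ ^ k) x) := rfl
  have hset : (σ ^ j : Equiv.Perm α) '' {z | ∃ k : ℕ, (τ ^ k) x = z}
      = {z | ∃ k : ℕ, (τ ^ k) y = z} := by
    ext z
    simp only [Set.mem_image, Set.mem_setOf_eq]
    constructor
    · rintro ⟨w, ⟨k, hk⟩, hw⟩
      exact ⟨k, by rw [key k, hk, hw]⟩
    · rintro ⟨k, hk⟩
      exact ⟨(τ ^ k) x, ⟨k, rfl⟩, by rw [← key k, hk]⟩
  unfold orbitLen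
  rw [← hset, Set.ncard_image_of_injective _ (Equiv.injective _)]
end
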